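/- arXiv:2303.10424 — 3 statements merged into one kernel-verified Lean document; each statement's English description precedes it below -/
import Mathlib

section
/- For every z in the upper half-plane ℍ and every s ∈ ℂ, the family over coprime integer pairs (c,d) of the terms (Im z)^s · (|cz+d|²)^{−s} is summable (absolutely convergent) if and only if Re s > 1. -/
/-!
The norm of the summand is `(Im z) ^ Re s * |cz + d| ^ (-k)` with `k = 2 Re s`, so the claim is
that the sum of `|cz + d| ^ (-k)` over coprime `(c, d)` converges iff `2 < k`.

Since `r z * ‖v‖ ≤ |v 0 * z + v 1| ≤ (|z| + 1) * ‖v‖` for `v ≠ 0` (sup norm), the sum over all of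
`ℤ²` converges iff `∑ ‖v‖ ^ (-k)` does, i.e. iff `2 < k`: the box `‖v‖ = n` has `8n` points.
Writing `v = gcd(v) • w` with `w` coprime, the sum over `ℤ²` is `∑ₙ n ^ (-k)` times the coprime
sum, so for `1 < k` the coprime sum converges only if the full one does. Finally, `|cz + d|` is
bounded below by `r z > 0`, so convergence for some `k ≤ 2` would give convergence for `k = 2`.
-/

open Complex UpperHalfPlane EisensteinSeries Finset

lemma summable_norm_rpow_iff {k : ℝ} :
    Summable (fun x : Fin 2 → ℤ ↦ ‖x‖ ^ (-k)) ↔ 2 < k := by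
  refine ⟨fun h ↦ ?_, summable_one_div_norm_rpow⟩
  rw [← (finTwoArrowEquiv _).symm.summable_iff] at h
  replace h := ((summable_partition (fun _ ↦ Real.rpow_nonneg (norm_nonneg _) _)
    Int.existsUnique_mem_box).mp h).2
  have hbox (n : ℕ) : ∑' x : ((box (n + 1) : Finset (ℤ × ℤ)) : Set (ℤ × ℤ)),
      ‖(finTwoArrowEquiv ℤ).symm x‖ ^ (-k) = 8 * ((n + 1 : ℕ) : ℝ) ^ (1 - k) := by
    rw [Finset.tsum_subtype' (f := fun x ↦ ‖(finTwoArrowEquiv ℤ).symm x‖ ^ (-k)),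
      Finset.sum_congr rfl fun x hx ↦ by
        rw [show ‖(finTwoArrowEquiv ℤ).symm x‖ = ((n + 1 : ℕ) : ℝ) by
          simpa [norm_eq_max_natAbs] using congrArg (Nat.cast (R := ℝ)) (Int.mem_box.mp hx)],
      Finset.sum_const, Int.card_box n.succ_ne_zero, nsmul_eq_mul, sub_eq_add_neg,
      Real.rpow_add (by positivity), Real.rpow_one]
    push_cast
    ring
  have h8 : Summable fun n : ℕ ↦ ((n + 1 : ℕ) : ℝ) ^ (1 - k) :=
    (summable_mul_left_iff (by norm_num : (8 : ℝ) ≠ 0)).mp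
      (((summable_nat_add_iff 1).mpr h).congr hbox)
  linarith [Real.summable_nat_rpow.mp ((summable_nat_add_iff 1).mp h8)]

noncomputable def normEisSummand (k : ℝ) (z : ℍ) (v : Fin 2 → ℤ) : ℝ :=
  ‖v 0 * (z : ℂ) + v 1‖ ^ (-k)

lemma normEisSummand_nonneg (k : ℝ) (z : ℍ) (v : Fin 2 → ℤ) : 0 ≤ normEisSummand k z v :=
  Real.rpow_nonneg (norm_nonneg _) _

lemma one_le_norm_of_ne_zero {v : Fin 2 → ℤ} (hv : v ≠ 0) : 1 ≤ ‖v‖ := by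
  obtain ⟨i, hi⟩ := Function.ne_iff.mp hv
  calc (1 : ℝ) ≤ ‖v i‖ := by rw [Int.norm_eq_abs]; exact_mod_cast Int.one_le_abs hi
    _ ≤ ‖v‖ := norm_le_pi_norm v i

lemma r_le_norm_linear (z : ℍ) {v : Fin 2 → ℤ} (hv : v ≠ 0) : r z ≤ ‖v 0 * (z : ℂ) + v 1‖ :=
  (le_mul_of_one_le_right (r_pos z).le (one_le_norm_of_ne_zero hv)).trans (r_mul_max_le z hv)

lemma norm_linear_le (z : ℍ) (v : Fin 2 → ℤ) :
    ‖v 0 * (z : ℂ) + v 1‖ ≤ (‖(z : ℂ)‖ + 1) * ‖v‖ := by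
  have hv (i : Fin 2) : ‖(v i : ℂ)‖ ≤ ‖v‖ := by
    simpa [Complex.norm_intCast, Int.norm_eq_abs] using norm_le_pi_norm v i
  calc ‖v 0 * (z : ℂ) + v 1‖ ≤ ‖(v 0 : ℂ)‖ * ‖(z : ℂ)‖ + ‖(v 1 : ℂ)‖ := by
        grw [norm_add_le, norm_mul]
    _ ≤ ‖v‖ * ‖(z : ℂ)‖ + ‖v‖ := by gcongr <;> exact hv _
    _ = (‖(z : ℂ)‖ + 1) * ‖v‖ := by ring

lemma summable_normEisSummand_iff (z : ℍ) {k : ℝ} (hk : 0 ≤ k) :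
    Summable (normEisSummand k z) ↔ 2 < k := by
  rw [← summable_norm_rpow_iff]
  constructor
  · intro h
    have hC : 0 < ‖(z : ℂ)‖ + 1 := by positivity
    rw [← summable_mul_left_iff (Real.rpow_pos_of_pos hC (-k)).ne']
    refine h.of_norm_bounded_eventually ((Filter.eventually_cofinite_ne 0).mono fun v hv ↦ ?_)
    rw [Real.norm_of_nonneg (by positivity), ← Real.mul_rpow hC.le (norm_nonneg _)]
    exact Real.rpow_le_rpow_of_nonpos ((r_pos z).trans_le (r_le_norm_linear z hv))
      (norm_linear_le z v) (neg_nonpos.mpr hk)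
  · intro h
    exact (h.mul_left (r z ^ (-k))).of_nonneg_of_le (normEisSummand_nonneg k z) (summand_bound z hk)

lemma Summable.normEisSummand_of_exponent_le {ι : Type*} {f : ι → Fin 2 → ℤ} (hf : ∀ i, f i ≠ 0)
    {z : ℍ} {k k' : ℝ} (h : Summable fun i ↦ normEisSummand k z (f i)) (hk : k ≤ k') :
    Summable fun i ↦ normEisSummand k' z (f i) := by
  refine (h.mul_right (r z ^ (k - k'))).of_nonneg_of_le (fun i ↦ normEisSummand_nonneg _ z _)
    fun i ↦ ?_
  have hr := r_le_norm_linear z (hf i)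
  calc normEisSummand k' z (f i) =
        normEisSummand k z (f i) * ‖f i 0 * (z : ℂ) + f i 1‖ ^ (k - k') := by
        rw [normEisSummand, normEisSummand, ← Real.rpow_add ((r_pos z).trans_le hr)]
        ring_nf
    _ ≤ normEisSummand k z (f i) * r z ^ (k - k') :=
        mul_le_mul_of_nonneg_left (Real.rpow_le_rpow_of_nonpos (r_pos z) hr (by linarith))
          (normEisSummand_nonneg k z _)

lemma normEisSummand_of_mem_gammaSet (k : ℝ) (z : ℍ) {n : ℕ} {v : Fin 2 → ℤ}
    (hv : v ∈ gammaSet 1 n 0) :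
    normEisSummand k z v = (n : ℝ) ^ (-k) * normEisSummand k z (divIntMap n v) := by
  conv_lhs => rw [gammaSet_eq_gcd_mul_divIntMap hv]
  simp only [normEisSummand, Pi.smul_apply, nsmul_eq_mul, Int.cast_mul, Int.cast_natCast]
  rw [← Real.mul_rpow (Nat.cast_nonneg _) (norm_nonneg _), ← Complex.norm_natCast, ← norm_mul]
  congr 2
  ring

lemma ne_zero_of_mem_gammaSet_one {v : Fin 2 → ℤ} (hv : v ∈ gammaSet 1 1 0) : v ≠ 0 := by
  rintro rfl
  simp [gammaSet_one_mem_iff] at hv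

lemma summable_normEisSummand_of_summable_gammaSet (z : ℍ) {k : ℝ} (hk : 1 < k)
    (h : Summable fun v : gammaSet 1 1 0 ↦ normEisSummand k z v) :
    Summable (normEisSummand k z) := by
  rw [← gammaSetDivGcdSigmaEquiv.symm.summable_iff,
    summable_sigma_of_nonneg (f := normEisSummand k z ∘ gammaSetDivGcdSigmaEquiv.symm)
      fun _ ↦ normEisSummand_nonneg k z _]
  have hfiber (n : ℕ) : HasSum (fun v : gammaSet 1 n 0 ↦ normEisSummand k z v)
      ((n : ℝ) ^ (-k) * ∑' v : gammaSet 1 1 0, normEisSummand k z v) := by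
    rcases eq_or_ne n 0 with rfl | hn
    · have h0 : (((0 : ℕ) : ℝ)) ^ (-k) = 0 := by simp [Real.zero_rpow (by linarith : -k ≠ 0)]
      rw [h0, zero_mul]
      exact hasSum_zero.congr_fun fun v ↦ by
        rw [normEisSummand_of_mem_gammaSet k z v.2, h0, zero_mul]
    · have : NeZero n := ⟨hn⟩
      exact ((gammaSetDivGcdEquiv n).hasSum_iff.mpr (h.hasSum.mul_left _)).congr_fun
        fun v ↦ normEisSummand_of_mem_gammaSet k z v.2
  exact ⟨fun n ↦ (hfiber n).summable, ((Real.summable_nat_rpow.mpr (by linarith)).mul_right _).congr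
    fun n ↦ (hfiber n).tsum_eq.symm⟩

lemma summable_normEisSummand_gammaSet_iff (z : ℍ) {k : ℝ} :
    Summable (fun v : gammaSet 1 1 0 ↦ normEisSummand k z v) ↔ 2 < k := by
  refine ⟨fun h ↦ ?_, fun hk ↦ ((summable_normEisSummand_iff z (by linarith)).mpr hk).subtype _⟩
  by_contra! hk
  have h2 := h.normEisSummand_of_exponent_le (fun v ↦ ne_zero_of_mem_gammaSet_one v.2) hk
  exact lt_irrefl _ ((summable_normEisSummand_iff z zero_le_two).mp
    (summable_normEisSummand_of_summable_gammaSet z one_lt_two h2))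

/-- For every `z` in the upper half-plane and every `s : ℂ`, the family,
indexed by coprime integer pairs `(c, d)`, of terms `(Im z)^s * (|c*z + d|^2)^(-s)`
is summable (absolutely convergent) if and only if `Re s > 1`. -/
theorem eisenstein_summable_iff (z : ℂ) (hz : 0 < z.im) (s : ℂ) :
    Summable (fun p : {p : ℤ × ℤ // Int.gcd p.1 p.2 = 1} =>
      (z.im : ℂ) ^ s * ((‖(p : ℤ × ℤ).1 * z + (p : ℤ × ℤ).2‖ ^ 2 : ℝ) : ℂ) ^ (-s))
      ↔ 1 < s.re := by
  let τ : ℍ := ⟨z, hz⟩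
  let e : {p : ℤ × ℤ // Int.gcd p.1 p.2 = 1} ≃ gammaSet 1 1 0 :=
    (finTwoArrowEquiv ℤ).symm.subtypeEquiv fun p ↦ by simp [gammaSet_one_mem_iff]
  have hnorm (p : {p : ℤ × ℤ // Int.gcd p.1 p.2 = 1}) :
      ‖(z.im : ℂ) ^ s * ((‖(p : ℤ × ℤ).1 * z + (p : ℤ × ℤ).2‖ ^ 2 : ℝ) : ℂ) ^ (-s)‖ =
        z.im ^ s.re * normEisSummand (2 * s.re) τ (e p) := by
    have hpos : 0 < ‖(p : ℤ × ℤ).1 * z + (p : ℤ × ℤ).2‖ := by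
      simpa [e, τ] using
        (r_pos τ).trans_le (r_le_norm_linear τ (ne_zero_of_mem_gammaSet_one (e p).2))
    rw [norm_mul, norm_cpow_eq_rpow_re_of_pos hz, norm_cpow_eq_rpow_re_of_pos (by positivity),
      ← Real.rpow_two, ← Real.rpow_mul hpos.le]
    simp [normEisSummand, e, τ, mul_comm]
  rw [← summable_norm_iff, funext hnorm, summable_mul_left_iff (Real.rpow_pos_of_pos hz _).ne']
  change Summable ((fun v : gammaSet 1 1 0 ↦ normEisSummand (2 * s.re) τ v) ∘ e) ↔ _
  rw [e.summable_iff, summable_normEisSummand_gammaSet_iff]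
  exact ⟨fun h ↦ by linarith, fun h ↦ by linarith⟩
end

section
/- For every fixed z ∈ ℍ, the function s ↦ E(z,s) is holomorphic (complex differentiable) on the half-plane {s ∈ ℂ : Re s > 1}. -/
/-!
Pulling out `(Im z)^s`, it suffices to show that the Dirichlet-type series `∑ R_p^{-s}` with
`R_p = |cz+d|² > 0` is holomorphic on `Re s > 1`. On a vertical strip `a < Re s < b` every term
is dominated by `R_p^{-a} + R_p^{-b}`, which is summable for `a > 1` because
`|cz+d| ≥ r(z) · ‖(c,d)‖` and `∑ ‖(c,d)‖^{-k}` converges for `k > 2`; a normally convergent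
series of entire functions is holomorphic.
-/

open Complex

/-- The level-one real-analytic Eisenstein series
`E(z,s) = (1/2) · Σ_{(c,d) ∈ ℤ², gcd(c,d)=1} (Im z)^s · (|cz+d|²)^(−s)`. -/
noncomputable def eisensteinE (z : ℂ) (s : ℂ) : ℂ :=
  (1 / 2) * ∑' p : {p : ℤ × ℤ // Int.gcd p.1 p.2 = 1},
    ((z.im : ℂ)) ^ s *
      ((‖((p : ℤ × ℤ).1 * z + (p : ℤ × ℤ).2 : ℂ)‖ ^ 2 : ℝ) : ℂ) ^ (-s)

open EisensteinSeries
open scoped UpperHalfPlane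

theorem Real.rpow_le_rpow_add_rpow {x a b σ : ℝ} (hx : 0 < x) (haσ : a ≤ σ) (hσb : σ ≤ b) :
    x ^ σ ≤ x ^ a + x ^ b := by
  rcases le_total 1 x with h | h
  · exact (Real.rpow_le_rpow_of_exponent_le h hσb).trans
      (le_add_of_nonneg_left (Real.rpow_nonneg hx.le _))
  · exact (Real.rpow_le_rpow_of_exponent_ge hx h haσ).trans
      (le_add_of_nonneg_right (Real.rpow_nonneg hx.le _))

theorem differentiableOn_tsum_ofReal_cpow_neg {ι : Type*} {r : ι → ℝ} (hr : ∀ i, 0 < r i)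
    {σ₀ : ℝ} (hsum : ∀ σ, σ₀ < σ → Summable fun i => r i ^ (-σ)) :
    DifferentiableOn ℂ (fun s : ℂ => ∑' i, (r i : ℂ) ^ (-s)) {s | σ₀ < s.re} := by
  intro s (hs : σ₀ < s.re)
  obtain ⟨a, hσ₀a, has⟩ := exists_between hs
  set b := s.re + 1
  have hU : IsOpen (re ⁻¹' Set.Ioo a b) := isOpen_Ioo.preimage continuous_re
  have hsU : s ∈ re ⁻¹' Set.Ioo a b := ⟨has, lt_add_one _⟩
  refine (DifferentiableOn.differentiableAt ?_ (hU.mem_nhds hsU)).differentiableWithinAt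
  refine differentiableOn_tsum_of_summable_norm
    ((hsum b (by linarith)).add (hsum a hσ₀a)) (fun i => ?_) hU (fun i w ⟨haw, hwb⟩ => ?_)
  · exact (differentiable_neg.const_cpow (Or.inl (ofReal_ne_zero.2 (hr i).ne'))).differentiableOn
  · rw [norm_cpow_eq_rpow_re_of_pos (hr i), neg_re]
    exact Real.rpow_le_rpow_add_rpow (hr i) (neg_le_neg hwb.le) (neg_le_neg haw.le)

theorem norm_linear_pos {z : ℂ} (hz : z.im ≠ 0) {p : ℤ × ℤ} (hp : p ≠ 0) :
    0 < ‖(p.1 * z + p.2 : ℂ)‖ := by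
  refine norm_pos_iff.2 ?_
  simpa using UpperHalfPlane.linear_ne_zero_of_im hz (cd := ![p.1, p.2])
    (by simpa [funext_iff, Fin.forall_fin_two, Prod.ext_iff] using hp)

theorem summable_norm_linear_rpow_neg (z : ℍ) {k : ℝ} (hk : 2 < k) :
    Summable fun x : Fin 2 → ℤ => ‖x 0 * (z : ℂ) + x 1‖ ^ (-k) :=
  ((summable_one_div_norm_rpow hk).mul_left (r z ^ (-k))).of_nonneg_of_le
    (fun _ => by positivity) (summand_bound z (by linarith))

theorem summable_norm_sq_linear_rpow_neg (z : ℍ) {t : ℝ} (ht : 1 < t) :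
    Summable fun p : ℤ × ℤ => (‖(p.1 * (z : ℂ) + p.2)‖ ^ 2) ^ (-t) := by
  refine ((finTwoArrowEquiv ℤ).symm.summable_iff.2
    (summable_norm_linear_rpow_neg z (k := 2 * t) (by linarith))).congr fun p => ?_
  simp only [Function.comp_apply, finTwoArrowEquiv_symm_apply, Matrix.cons_val_zero,
    Matrix.cons_val_one]
  rw [← Real.rpow_natCast, ← Real.rpow_mul (norm_nonneg _), Nat.cast_ofNat, mul_neg]

/-- For every fixed `z ∈ ℍ`, the function `s ↦ E(z, s)` is holomorphic on the
half-plane `{s : Re s > 1}`. -/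
theorem eisensteinE_holomorphic_in_s (z : ℂ) (hz : 0 < z.im) :
    DifferentiableOn ℂ (fun s : ℂ => eisensteinE z s) {s : ℂ | 1 < s.re} := by
  set R : {p : ℤ × ℤ // Int.gcd p.1 p.2 = 1} → ℝ := fun p => ‖(p.1.1 * z + p.1.2 : ℂ)‖ ^ 2
  have hR : ∀ p, 0 < R p := fun p =>
    pow_pos (norm_linear_pos hz.ne' fun h => by simpa [h] using p.2) 2
  have hG := differentiableOn_tsum_ofReal_cpow_neg hR fun _ hσ =>
    (summable_norm_sq_linear_rpow_neg ⟨z, hz⟩ hσ).subtype _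
  have hE : (fun s => eisensteinE z s) =
      fun s => 1 / 2 * ((z.im : ℂ) ^ s * ∑' p, (R p : ℂ) ^ (-s)) := by
    ext s
    rw [eisensteinE, tsum_mul_left]
  rw [hE]
  exact ((differentiable_id.const_cpow (Or.inl (ofReal_ne_zero.2 hz.ne'))).differentiableOn.mul
    hG).const_mul _
end

section
/- Let U ⊂ ℂ be an open neighbourhood of 1/2 that is invariant under s ↦ 1−s, let P ⊂ U be closed in U and discrete, and let β : U → ℂ be holomorphic on U ∖ P and meromorphic on U (at every point of P, β has at worst a pole). If β(s)·β(1−s) = 1 for all s ∈ U with s ∉ P and 1−s ∉ P, then β does not have a pole at 1/2: the limit v = lim_{s → 1/2, s ≠ 1/2} β(s) exists in ℂ and satisfies v = 1 or v = −1. -/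
/-!
Near `1/2` the functional equation says that `β · (β ∘ σ)` with `σ s = 1 - s` is eventually `1`
on a punctured neighbourhood. Since `σ` is a local biholomorphism fixing `1/2`, `β ∘ σ` has the
same order at `1/2` as `β`, so twice the order of `β` is the order of `1`, which is `0`. Hence `β`
has a finite limit `v` at `1/2`, and passing to the limit in the functional equation gives
`v² = 1`.
-/

open Complex Filter Topology

theorem eventually_nhdsNE_notMem_of_discreteTopology {X : Type*} [TopologicalSpace X]
    {U P : Set X} [DiscreteTopology P] (hP : U ∩ closure P ⊆ P) {x : X} (hx : x ∈ U) :
    ∀ᶠ z in 𝓝[≠] x, z ∉ P := by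
  by_cases hxP : x ∈ P
  · exact inf_principal_eq_bot.mp (discreteTopology_subtype_iff.mp ‹_› x hxP)
  · have hx' : x ∉ closure P := fun h ↦ hxP (hP ⟨hx, h⟩)
    filter_upwards [mem_nhdsWithin_of_mem_nhds (isClosed_closure.isOpen_compl.mem_nhds hx')]
      with z hz hzP using hz (subset_closure hzP)

theorem WithTop.eq_zero_of_add_self_eq_zero {a : WithTop ℤ} (h : a + a = 0) : a = 0 := by
  induction a with
  | top => simp at h
  | coe n => norm_cast at h ⊢; omega

theorem AnalyticAt.tendsto_nhdsNE_of_deriv_ne_zero {𝕜 : Type*} [NontriviallyNormedField 𝕜]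
    {g : 𝕜 → 𝕜} {x : 𝕜} (hg : AnalyticAt 𝕜 g x) (hg' : deriv g x ≠ 0) :
    Tendsto g (𝓝[≠] x) (𝓝[≠] (g x)) := by
  refine hg.map_nhdsNE ?_
  rw [eventuallyConst_iff_analyticOrderAt_sub_eq_top,
    hg.analyticOrderAt_sub_eq_one_of_deriv_ne_zero hg']
  exact ENat.one_ne_top

section

variable {𝕜 : Type*} [NontriviallyNormedField 𝕜] [CompleteSpace 𝕜] [CharZero 𝕜]
  {f g : 𝕜 → 𝕜} {x : 𝕜}

theorem meromorphicOrderAt_eq_zero_of_mul_comp_eventuallyEq_one (hf : MeromorphicAt f x)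
    (hg : AnalyticAt 𝕜 g x) (hg' : deriv g x ≠ 0) (hgx : g x = x)
    (hfg : (fun z ↦ f z * f (g z)) =ᶠ[𝓝[≠] x] 1) :
    meromorphicOrderAt f x = 0 := by
  have hfg_mer : MeromorphicAt (f ∘ g) x := (hgx ▸ hf).comp_analyticAt hg
  have hord_comp : meromorphicOrderAt (f ∘ g) x = meromorphicOrderAt f x := by
    rw [meromorphicOrderAt_comp_of_deriv_ne_zero hg hg', hgx]
  apply WithTop.eq_zero_of_add_self_eq_zero
  calc meromorphicOrderAt f x + meromorphicOrderAt f x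
      = meromorphicOrderAt (f * (f ∘ g)) x := by
        rw [meromorphicOrderAt_mul hf hfg_mer, hord_comp]
    _ = meromorphicOrderAt (1 : 𝕜 → 𝕜) x := meromorphicOrderAt_congr hfg
    _ = 0 := by classical rw [Pi.one_def, meromorphicOrderAt_const]; simp

theorem exists_tendsto_nhdsNE_and_mul_self_eq_one_of_mul_comp_eventuallyEq_one
    (hf : MeromorphicAt f x) (hg : AnalyticAt 𝕜 g x) (hg' : deriv g x ≠ 0) (hgx : g x = x)
    (hfg : (fun z ↦ f z * f (g z)) =ᶠ[𝓝[≠] x] 1) :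
    ∃ v, Tendsto f (𝓝[≠] x) (𝓝 v) ∧ v * v = 1 := by
  obtain ⟨v, hv⟩ := tendsto_nhds_of_meromorphicOrderAt_nonneg hf
    (meromorphicOrderAt_eq_zero_of_mul_comp_eventuallyEq_one hf hg hg' hgx hfg).ge
  have hg_tendsto := hg.tendsto_nhdsNE_of_deriv_ne_zero hg'
  rw [hgx] at hg_tendsto
  exact ⟨v, hv, tendsto_nhds_unique (hv.mul (hv.comp hg_tendsto))
    (tendsto_const_nhds.congr' hfg.symm)⟩

end

theorem functional_equation_no_pole_at_half_general (U : Set ℂ) (hU : IsOpen U)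
    (hhalf : (1 / 2 : ℂ) ∈ U)
    (P : Set ℂ) (hPclosed : U ∩ closure P ⊆ P)
    (hPdisc : DiscreteTopology P)
    (β : ℂ → ℂ) (hβm : MeromorphicOn β U)
    (hfe : ∀ s ∈ U, s ∉ P → (1 - s) ∉ P → β s * β (1 - s) = 1) :
    ∃ v : ℂ, Tendsto β (nhdsWithin (1 / 2 : ℂ) {(1 / 2 : ℂ)}ᶜ) (nhds v) ∧
      (v = 1 ∨ v = -1) := by
  have hσ_an : AnalyticAt ℂ (fun s : ℂ ↦ 1 - s) (1 / 2) := by fun_prop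
  have hσ_deriv : deriv (fun s : ℂ ↦ 1 - s) (1 / 2) ≠ 0 := by simp
  have hσ_fix : (1 : ℂ) - 1 / 2 = 1 / 2 := by norm_num
  have hσ_tendsto := hσ_an.tendsto_nhdsNE_of_deriv_ne_zero hσ_deriv
  rw [hσ_fix] at hσ_tendsto
  have hnotP := eventually_nhdsNE_notMem_of_discreteTopology hPclosed hhalf
  have hfe_near : (fun s ↦ β s * β (1 - s)) =ᶠ[𝓝[≠] (1 / 2)] 1 := by
    filter_upwards [mem_nhdsWithin_of_mem_nhds (hU.mem_nhds hhalf), hnotP,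
      hσ_tendsto.eventually hnotP]
      with s hsU hsP hσsP using hfe s hsU hsP hσsP
  obtain ⟨v, hv, hvv⟩ := exists_tendsto_nhdsNE_and_mul_self_eq_one_of_mul_comp_eventuallyEq_one
    (hβm _ hhalf) hσ_an hσ_deriv hσ_fix hfe_near
  exact ⟨v, hv, mul_self_eq_one_iff.mp hvv⟩

/-- Let `U` be an open neighbourhood of `1/2` invariant under `s ↦ 1 - s`, let
`P ⊆ U` be closed in `U` and discrete, and let `β` be holomorphic on `U \ P` and meromorphic on
`U`. If `β(s)·β(1-s) = 1` whenever both factors are defined, then `β` has no pole at `1/2`: the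
limit `v = lim_{s → 1/2, s ≠ 1/2} β(s)` exists and equals `1` or `-1`. -/
theorem functional_equation_no_pole_at_half (U : Set ℂ) (hU : IsOpen U)
    (hhalf : (1 / 2 : ℂ) ∈ U) (hsym : ∀ s ∈ U, 1 - s ∈ U)
    (P : Set ℂ) (hPU : P ⊆ U) (hPclosed : U ∩ closure P ⊆ P)
    (hPdisc : DiscreteTopology P)
    (β : ℂ → ℂ) (hβ : DifferentiableOn ℂ β (U \ P)) (hβm : MeromorphicOn β U)
    (hfe : ∀ s ∈ U, s ∉ P → (1 - s) ∉ P → β s * β (1 - s) = 1) :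
    ∃ v : ℂ, Tendsto β (nhdsWithin (1 / 2 : ℂ) {(1 / 2 : ℂ)}ᶜ) (nhds v) ∧
      (v = 1 ∨ v = -1) :=
  functional_equation_no_pole_at_half_general U hU hhalf P hPclosed hPdisc β hβm hfe
end
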